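/- arXiv:1106.5470 — 2 statements merged into one kernel-verified Lean document; each statement's English description precedes it below -/
import Mathlib

section
/- Define the clause phase difference of two clauses as the minimum Hamming distance between an assignment falsifying the first clause and an assignment falsifying the second. In a Horn MUC, the phase difference between any two distinct clauses is at most 1; in particular no Horn MUC contains two clauses C1, C2 with C1 containing positive literal x1 and negative literal ¬x2 while C2 contains positive literal x2 and negative literal ¬x1, such that the only assignments falsifying them require flipping two variables. -/
/-!
Models of a Horn formula are closed under pointwise conjunction. In a minimal unsatisfiable
formula every clause `C` is falsified by some model of the formula without `C`. Two such
falsifiers of `C₁` and `C₂` can be merged into falsifiers that differ only on the variables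
occurring positively in one clause and negatively in the other. If there were two such
variables, the Horn condition would force one of them to be positive in `C₁` and the other
positive in `C₂`; the conjunction of a model of `F ∖ {C₂}` and a model of `F ∖ {C₁}` would
then satisfy the whole of `F`.
-/

abbrev FClause (n : ℕ) := Finset (Fin n × Bool)
abbrev FCNF (n : ℕ) := Finset (FClause n)

def flitEval {n : ℕ} (τ : Fin n → Bool) (l : Fin n × Bool) : Bool :=
  if l.2 then τ l.1 else !(τ l.1)

def FClauseSat {n : ℕ} (τ : Fin n → Bool) (C : FClause n) : Prop :=
  ∃ l ∈ C, flitEval τ l = true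

/-- An assignment falsifies a clause when it makes all its literals false. -/
def Falsifies {n : ℕ} (τ : Fin n → Bool) (C : FClause n) : Prop :=
  ∀ l ∈ C, flitEval τ l = false

def FSat {n : ℕ} (F : FCNF n) : Prop := ∃ τ, ∀ C ∈ F, FClauseSat τ C

def FMUC {n : ℕ} (F : FCNF n) : Prop :=
  ¬ FSat F ∧ ∀ C ∈ F, FSat (F.erase C)

/-- A Horn clause has at most one positive literal. -/
def FHorn {n : ℕ} (F : FCNF n) : Prop :=
  ∀ C ∈ F, (C.filter (fun l => l.2 = true)).card ≤ 1

variable {n : ℕ}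

lemma flitEval_eq_true_iff {τ : Fin n → Bool} {l : Fin n × Bool} :
    flitEval τ l = true ↔ τ l.1 = l.2 := by
  rcases l with ⟨v, _ | _⟩ <;> simp [flitEval]

lemma flitEval_eq_false_iff {τ : Fin n → Bool} {l : Fin n × Bool} :
    flitEval τ l = false ↔ τ l.1 = !l.2 := by
  rcases l with ⟨v, _ | _⟩ <;> simp [flitEval]

lemma Falsifies.apply_eq {τ : Fin n → Bool} {C : FClause n} (h : Falsifies τ C)
    {v : Fin n} {b : Bool} (hv : (v, b) ∈ C) : τ v = !b :=
  flitEval_eq_false_iff.mp (h _ hv)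

def clashVars (C₁ C₂ : FClause n) : Finset (Fin n) :=
  (C₁.filter fun l => (l.1, !l.2) ∈ C₂).image Prod.fst

lemma mem_clashVars {C₁ C₂ : FClause n} {v : Fin n} :
    v ∈ clashVars C₁ C₂ ↔ ∃ b, (v, b) ∈ C₁ ∧ (v, !b) ∈ C₂ := by
  simp [clashVars]

lemma Falsifies.piecewise_vars {σ : Fin n → Bool} {C : FClause n} (h : Falsifies σ C)
    (ρ : Fin n → Bool) : Falsifies ((C.image Prod.fst).piecewise σ ρ) C := fun l hl => by
  rw [flitEval_eq_false_iff, Finset.piecewise_eq_of_mem _ _ _ (Finset.mem_image_of_mem _ hl)]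
  exact flitEval_eq_false_iff.mp (h l hl)

lemma Falsifies.mem_clashVars {σ₁ σ₂ : Fin n → Bool} {C₁ C₂ : FClause n}
    (h₁ : Falsifies σ₁ C₁) (h₂ : Falsifies σ₂ C₂) {v : Fin n}
    (hv₁ : v ∈ C₁.image Prod.fst) (hv₂ : v ∈ C₂.image Prod.fst) (hne : σ₁ v ≠ σ₂ v) :
    v ∈ clashVars C₁ C₂ := by
  obtain ⟨⟨_, b₁⟩, hl₁, rfl⟩ := Finset.mem_image.mp hv₁
  obtain ⟨⟨v, b₂⟩, hl₂, rfl⟩ := Finset.mem_image.mp hv₂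
  rw [h₁.apply_eq hl₁, h₂.apply_eq hl₂] at hne
  have hb : b₂ = !b₁ := by cases b₁ <;> cases b₂ <;> simp_all
  exact _root_.mem_clashVars.mpr ⟨b₁, hl₁, hb ▸ hl₂⟩

lemma exists_falsifies_hammingDist_le_card_clashVars {σ₁ σ₂ : Fin n → Bool}
    {C₁ C₂ : FClause n} (h₁ : Falsifies σ₁ C₁) (h₂ : Falsifies σ₂ C₂) :
    ∃ τ₁ τ₂ : Fin n → Bool, Falsifies τ₁ C₁ ∧ Falsifies τ₂ C₂ ∧
      hammingDist τ₁ τ₂ ≤ (clashVars C₁ C₂).card := by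
  -- `τ₁` agrees with `σ₂` off the variables of `C₁`, and `τ₂` with `τ₁` off those of `C₂`.
  let τ₁ := (C₁.image Prod.fst).piecewise σ₁ σ₂
  refine ⟨τ₁, (C₂.image Prod.fst).piecewise σ₂ τ₁, h₁.piecewise_vars σ₂,
    h₂.piecewise_vars τ₁, Finset.card_le_card fun v hv => ?_⟩
  have hne := (Finset.mem_filter.mp hv).2
  by_cases hv₂ : v ∈ C₂.image Prod.fst
  swap
  · exact absurd (Finset.piecewise_eq_of_notMem _ _ _ hv₂).symm hne
  rw [Finset.piecewise_eq_of_mem _ _ _ hv₂] at hne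
  by_cases hv₁ : v ∈ C₁.image Prod.fst
  swap
  · exact absurd (Finset.piecewise_eq_of_notMem _ _ _ hv₁) hne
  have hτ₁ : τ₁ v = σ₁ v := Finset.piecewise_eq_of_mem _ _ _ hv₁
  exact h₁.mem_clashVars h₂ hv₁ hv₂ (hτ₁ ▸ hne)

lemma FClauseSat.and {σ σ' : Fin n → Bool} {C : FClause n}
    (hC : (C.filter fun l => l.2 = true).card ≤ 1)
    (h : FClauseSat σ C) (h' : FClauseSat σ' C) : FClauseSat (fun v => σ v && σ' v) C := by
  obtain ⟨⟨v, b⟩, hl, hσ⟩ := h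
  obtain ⟨⟨v', b'⟩, hl', hσ'⟩ := h'
  rw [flitEval_eq_true_iff] at hσ hσ'
  cases b with
  | false => exact ⟨_, hl, flitEval_eq_true_iff.mpr (by simp_all)⟩
  | true =>
    cases b' with
    | false => exact ⟨_, hl', flitEval_eq_true_iff.mpr (by simp_all)⟩
    | true =>
      have hvv' : (v, true) = (v', true) := Finset.card_le_one.mp hC _
        (Finset.mem_filter.mpr ⟨hl, rfl⟩) _ (Finset.mem_filter.mpr ⟨hl', rfl⟩)
      cases hvv'
      exact ⟨_, hl, flitEval_eq_true_iff.mpr (by simp_all)⟩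

lemma falsifies_of_not_fSat {F : FCNF n} (hF : ¬ FSat F) {C : FClause n} {τ : Fin n → Bool}
    (hτ : ∀ C' ∈ F.erase C, FClauseSat τ C') : Falsifies τ C := by
  intro l hl
  by_contra hlτ
  refine hF ⟨τ, fun C' hC' => ?_⟩
  rcases eq_or_ne C' C with rfl | hne
  · exact ⟨l, hl, Bool.not_eq_false _ ▸ hlτ⟩
  · exact hτ C' (Finset.mem_erase.mpr ⟨hne, hC'⟩)

lemma FMUC.exists_sat_erase_falsifies {F : FCNF n} (hMUC : FMUC F) {C : FClause n}
    (hC : C ∈ F) :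
    ∃ τ : Fin n → Bool, (∀ C' ∈ F.erase C, FClauseSat τ C') ∧ Falsifies τ C := by
  obtain ⟨τ, hτ⟩ := hMUC.2 C hC
  exact ⟨τ, hτ, falsifies_of_not_fSat hMUC.1 hτ⟩

lemma FMUC.not_crossing {F : FCNF n} (hHorn : FHorn F) (hMUC : FMUC F)
    {C₁ C₂ : FClause n} (h₁ : C₁ ∈ F) (h₂ : C₂ ∈ F) {u w : Fin n}
    (hu₁ : (u, true) ∈ C₁) (hw₁ : (w, false) ∈ C₁)
    (hw₂ : (w, true) ∈ C₂) (hu₂ : (u, false) ∈ C₂) : False := by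
  obtain ⟨σ₂, hsat₂, hfal₂⟩ := hMUC.exists_sat_erase_falsifies h₂
  obtain ⟨σ₁, hsat₁, hfal₁⟩ := hMUC.exists_sat_erase_falsifies h₁
  refine hMUC.1 ⟨fun v => σ₂ v && σ₁ v, fun C hC => ?_⟩
  rcases eq_or_ne C C₁ with rfl | hC₁
  · exact ⟨_, hw₁, flitEval_eq_true_iff.mpr (by simp [hfal₂.apply_eq hw₂])⟩
  rcases eq_or_ne C C₂ with rfl | hC₂
  · exact ⟨_, hu₂, flitEval_eq_true_iff.mpr (by simp [hfal₁.apply_eq hu₁])⟩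
  exact (hsat₂ C (Finset.mem_erase.mpr ⟨hC₂, hC⟩)).and (hHorn C hC)
    (hsat₁ C (Finset.mem_erase.mpr ⟨hC₁, hC⟩))

lemma FMUC.card_clashVars_le_one {F : FCNF n} (hHorn : FHorn F) (hMUC : FMUC F)
    {C₁ C₂ : FClause n} (h₁ : C₁ ∈ F) (h₂ : C₂ ∈ F) : (clashVars C₁ C₂).card ≤ 1 := by
  refine Finset.card_le_one.mpr fun u hu w hw => ?_
  obtain ⟨b, hub₁, hub₂⟩ := mem_clashVars.mp hu
  obtain ⟨c, hwc₁, hwc₂⟩ := mem_clashVars.mp hw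
  have horn_unique {C : FClause n} (hC : C ∈ F) (hu : (u, true) ∈ C) (hw : (w, true) ∈ C) :
      u = w :=
    congrArg Prod.fst <| Finset.card_le_one.mp (hHorn C hC) _
      (Finset.mem_filter.mpr ⟨hu, rfl⟩) _ (Finset.mem_filter.mpr ⟨hw, rfl⟩)
  cases b <;> cases c
  · exact horn_unique h₂ hub₂ hwc₂
  · exact (hMUC.not_crossing hHorn h₁ h₂ hwc₁ hub₁ hub₂ hwc₂).elim
  · exact (hMUC.not_crossing hHorn h₁ h₂ hub₁ hwc₁ hwc₂ hub₂).elim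
  · exact horn_unique h₁ hub₁ hwc₁

/-- In a Horn MUC, the clause phase difference between any two distinct clauses
is at most 1: there exist an assignment falsifying the first and an assignment
falsifying the second at Hamming distance at most 1. -/
theorem hornMUC_phase_difference_le_one {n : ℕ} (F : FCNF n)
    (hHorn : FHorn F) (hMUC : FMUC F) :
    ∀ C1 ∈ F, ∀ C2 ∈ F, C1 ≠ C2 →
      ∃ τ1 τ2 : Fin n → Bool,
        Falsifies τ1 C1 ∧ Falsifies τ2 C2 ∧ hammingDist τ1 τ2 ≤ 1 := by
  intro C1 h1 C2 h2 _
  obtain ⟨σ1, -, hσ1⟩ := hMUC.exists_sat_erase_falsifies h1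
  obtain ⟨σ2, -, hσ2⟩ := hMUC.exists_sat_erase_falsifies h2
  obtain ⟨τ1, τ2, hτ1, hτ2, hdist⟩ := exists_falsifies_hammingDist_le_card_clashVars hσ1 hσ2
  exact ⟨τ1, τ2, hτ1, hτ2, hdist.trans (hMUC.card_clashVars_le_one hHorn h1 h2)⟩
end

section
/- Define a relation on Horn clauses: C1 ≥ C2 iff the (unique) positive literal of C2, when it exists, occurs negatively in C1 (or via chains thereof). In a Horn MUC, this implication ordering of clauses is a partial order: it is reflexive, transitive, and antisymmetric on the clauses of the MUC. -/
/-!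
Run unit propagation on `F`. As `F` is unsatisfiable, propagation derives the whole body of some
purely negative clause. Let `C ∈ F` have head `v` and a body variable `w`. If `w` were never
derived strictly before `v`, then `C` would never be needed in the propagation: a model of `F - C`
(which exists by minimality) makes every derived variable true and hence falsifies that negative
clause. So along every `HornStep` the head of the target is derived strictly before the head of the
source, and there are no cycles.
-/

abbrev Assignment := ℕ → Bool
abbrev Lit := ℕ × Bool
abbrev Clause := Finset Lit
abbrev CNF := Finset Clause

def litEval (τ : Assignment) (l : Lit) : Bool := if l.2 then τ l.1 else !(τ l.1)

def ClauseSat (τ : Assignment) (C : Clause) : Prop := ∃ l ∈ C, litEval τ l = true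

def CNFSat (τ : Assignment) (F : CNF) : Prop := ∀ C ∈ F, ClauseSat τ C

def Sat (F : CNF) : Prop := ∃ τ, CNFSat τ F

def MUC (F : CNF) : Prop := ¬ Sat F ∧ ∀ C ∈ F, Sat (F.erase C)

def HornCNF (F : CNF) : Prop := ∀ C ∈ F, (C.filter (fun l => l.2 = true)).card ≤ 1

def cnfVars (G : CNF) : Finset ℕ := G.sup (fun C => C.image Prod.fst)

/-- One-step implication order on Horn clauses within F: C1 ≥ C2 when some
variable occurs as the positive literal of C2 and negatively in C1. -/
def HornStep (F : CNF) (C1 C2 : Clause) : Prop :=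
  C1 ∈ F ∧ C2 ∈ F ∧ ∃ v : ℕ, (v, true) ∈ C2 ∧ (v, false) ∈ C1

def derived (F : CNF) : ℕ → Set ℕ
  | 0 => ∅
  | n + 1 => derived F n ∪ {v | ∃ C ∈ F, (v, true) ∈ C ∧ ∀ w, (w, false) ∈ C → w ∈ derived F n}

def DerivedBefore (F : CNF) (v u : ℕ) : Prop := ∃ n, v ∈ derived F n ∧ u ∉ derived F n

lemma derived_mono (F : CNF) : Monotone (derived F) :=
  monotone_nat_of_le_succ fun _ => Set.subset_union_left

lemma DerivedBefore.trans {F : CNF} {u v x : ℕ} (hvu : DerivedBefore F v u)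
    (hux : DerivedBefore F u x) : DerivedBefore F v x := by
  obtain ⟨n, hv, hu⟩ := hvu
  obtain ⟨m, hu', hx⟩ := hux
  have hnm : n ≤ m := by
    by_contra! hmn
    exact hu (derived_mono F hmn.le hu')
  exact ⟨m, derived_mono F hnm hv, hx⟩

lemma DerivedBefore.irrefl (F : CNF) (v : ℕ) : ¬ DerivedBefore F v v :=
  fun ⟨_, hv, hv'⟩ => hv' hv

lemma HornCNF.head_unique {F : CNF} (hF : HornCNF F) {C : Clause} (hC : C ∈ F) {u v : ℕ}
    (hu : (u, true) ∈ C) (hv : (v, true) ∈ C) : u = v :=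
  congrArg Prod.fst <| Finset.card_le_one.1 (hF C hC) _
    (Finset.mem_filter.2 ⟨hu, rfl⟩) _ (Finset.mem_filter.2 ⟨hv, rfl⟩)

lemma exists_derived_of_forall_derived (F : CNF) (C : Clause)
    (h : ∀ w, (w, false) ∈ C → ∃ n, w ∈ derived F n) :
    ∃ n, ∀ w, (w, false) ∈ C → w ∈ derived F n := by
  choose! stage hstage using h
  exact ⟨C.sup fun l => stage l.1, fun w hw =>
    derived_mono F (Finset.le_sup (f := fun l => stage l.1) hw) (hstage w hw)⟩

lemma exists_negative_clause_derived {F : CNF} (hF : ¬ Sat F) :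
    ∃ N ∈ F, (∀ v, (v, true) ∉ N) ∧ ∃ n, ∀ w, (w, false) ∈ N → w ∈ derived F n := by
  classical
  let τ : Assignment := fun v => decide (∃ n, v ∈ derived F n)
  have hτ : ¬ CNFSat τ F := fun h => hF ⟨τ, h⟩
  obtain ⟨N, hN, hfalse⟩ : ∃ N ∈ F, ∀ l ∈ N, litEval τ l = false := by
    simpa [CNFSat, ClauseSat] using hτ
  have hbody : ∀ w, (w, false) ∈ N → ∃ n, w ∈ derived F n := fun w hw => by
    simpa [τ, litEval] using hfalse _ hw
  obtain ⟨n, hn⟩ := exists_derived_of_forall_derived F N hbody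
  refine ⟨N, hN, fun v hv => ?_, n, hn⟩
  have hderived : ∃ n, v ∈ derived F n := ⟨n + 1, Or.inr ⟨N, hN, hv, hn⟩⟩
  simpa [τ, litEval, hderived] using hfalse _ hv

/-- Under `hlate`, the clause `C` never derives a variable that was not derived already. -/
lemma eq_true_of_mem_derived {F : CNF} (hF : HornCNF F) {C : Clause} (hC : C ∈ F) {v w : ℕ}
    (hv : (v, true) ∈ C) (hw : (w, false) ∈ C) (hlate : ∀ n, w ∈ derived F n → v ∈ derived F n)
    {τ : Assignment} (hτ : CNFSat τ (F.erase C)) :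
    ∀ n, ∀ u ∈ derived F n, τ u = true := by
  intro n
  induction n with
  | zero => exact fun _ hu => hu.elim
  | succ n ih =>
    rintro u (hu | ⟨D, hD, huD, hbody⟩)
    · exact ih u hu
    by_cases hDC : D = C
    · subst hDC
      obtain rfl := hF.head_unique hD huD hv
      exact ih u (hlate n (hbody w hw))
    obtain ⟨⟨x, _ | _⟩, hxD, hx⟩ := hτ D (Finset.mem_erase.2 ⟨hDC, hD⟩)
    · simp [litEval, ih x (hbody x hxD)] at hx
    · obtain rfl := hF.head_unique hD hxD huD
      simpa [litEval] using hx

lemma derivedBefore_of_mem {F : CNF} (hHorn : HornCNF F) (hMUC : MUC F) {C : Clause}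
    (hC : C ∈ F) {v w : ℕ} (hv : (v, true) ∈ C) (hw : (w, false) ∈ C) :
    DerivedBefore F w v := by
  by_contra hearly
  have hlate : ∀ n, w ∈ derived F n → v ∈ derived F n := fun n hwn =>
    by_contra fun hvn => hearly ⟨n, hwn, hvn⟩
  obtain ⟨τ, hτ⟩ := hMUC.2 C hC
  have htrue := eq_true_of_mem_derived hHorn hC hv hw hlate hτ
  obtain ⟨N, hN, hneg, n, hbody⟩ := exists_negative_clause_derived hMUC.1
  have hNC : N ≠ C := by
    rintro rfl
    exact hneg v hv
  obtain ⟨⟨x, _ | _⟩, hxN, hx⟩ := hτ N (Finset.mem_erase.2 ⟨hNC, hN⟩)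
  · simp [litEval, htrue n x (hbody x hxN)] at hx
  · exact hneg x hxN

lemma derivedBefore_of_transGen {F : CNF} (hHorn : HornCNF F) (hMUC : MUC F) {C D : Clause}
    (h : Relation.TransGen (HornStep F) C D) {u v : ℕ} (hu : (u, true) ∈ C)
    (hv : (v, true) ∈ D) : DerivedBefore F v u := by
  induction h using Relation.TransGen.head_induction_on generalizing u with
  | single hstep =>
    obtain ⟨hC, hD, x, hxD, hxC⟩ := hstep
    obtain rfl := hHorn.head_unique hD hxD hv
    exact derivedBefore_of_mem hHorn hMUC hC hu hxC
  | head hstep _ ih =>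
    obtain ⟨hC, -, x, hxB, hxC⟩ := hstep
    exact (ih hxB).trans (derivedBefore_of_mem hHorn hMUC hC hu hxC)

lemma not_transGen_hornStep_self {F : CNF} (hHorn : HornCNF F) (hMUC : MUC F) (C : Clause) :
    ¬ Relation.TransGen (HornStep F) C C := by
  intro h
  obtain ⟨B, -, hBC⟩ := Relation.TransGen.tail'_iff.1 h
  obtain ⟨-, -, v, hv, -⟩ := hBC
  exact DerivedBefore.irrefl F v (derivedBefore_of_transGen hHorn hMUC h hv hv)

/-- In a Horn MUC, the implication ordering of clauses (the reflexive-transitive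
closure of the one-step relation) is a partial order on the clauses: reflexive,
transitive, and antisymmetric. -/
theorem hornMUC_partial_order (F : CNF) (hHorn : HornCNF F) (hMUC : MUC F) :
    (∀ C, Relation.ReflTransGen (HornStep F) C C) ∧
    (∀ C1 C2 C3, Relation.ReflTransGen (HornStep F) C1 C2 →
      Relation.ReflTransGen (HornStep F) C2 C3 →
      Relation.ReflTransGen (HornStep F) C1 C3) ∧
    (∀ C1 C2, Relation.ReflTransGen (HornStep F) C1 C2 →
      Relation.ReflTransGen (HornStep F) C2 C1 → C1 = C2) := by
  refine ⟨fun _ => .refl, fun _ _ _ => .trans, fun C1 C2 h12 h21 => ?_⟩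
  rcases Relation.reflTransGen_iff_eq_or_transGen.1 h12 with h | h12
  · exact h.symm
  rcases Relation.reflTransGen_iff_eq_or_transGen.1 h21 with h | h21
  · exact h
  exact absurd (h12.trans h21) (not_transGen_hornStep_self hHorn hMUC C1)
end
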